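/- arXiv:1709.06689 — 9 statements merged into one kernel-verified Lean document; each statement's English description precedes it below -/
import Mathlib

section
/- Let n be a positive integer, C an additive category, and f• : X• → Y• a homotopy equivalence of (n+2)-term complexes in C. If X^0 = Y^0 = A and f^0 = id_A, then f• admits a homotopy inverse g• : Y• → X• with g^0 = id_A. -/
/-!
Basic definitions for the theory of `n`-exangulated categories
(Herschend–Liu–Nakaoka): `(n+2)`-term complexes in an additive category,
morphisms of such complexes, homotopies, and homotopy equivalences.

A complex is recorded as a function `obj : ℕ → C` together with differentials
`d i : obj i ⟶ obj (i+1)`; only the components in degrees `0, …, n+1`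
(and the differentials `d 0, …, d n`) are relevant, which is why all
conditions are imposed only in that range.
-/

open CategoryTheory CategoryTheory.Limits Opposite

universe w v u

namespace NExangulated

variable (C : Type u) [Category.{v} C] [Preadditive C]

/-- An `(n+2)`-term complex `X^0 → X^1 → ⋯ → X^{n+1}` in `C`. -/
structure NComplex (n : ℕ) where
  /-- the objects; only `obj 0, …, obj (n+1)` are relevant -/
  obj : ℕ → C
  /-- the differentials -/
  d : ∀ i : ℕ, obj i ⟶ obj (i + 1)
  /-- `d^{i+1} ∘ d^i = 0` for `0 ≤ i ≤ n-1` -/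
  d_comp_d : ∀ i : ℕ, i + 1 ≤ n → d i ≫ d (i + 1) = 0

variable {C}
variable {n : ℕ}

/-- A morphism of `(n+2)`-term complexes. -/
structure NComplexHom (X Y : NComplex C n) where
  /-- the components; only `f 0, …, f (n+1)` are relevant -/
  f : ∀ i : ℕ, X.obj i ⟶ Y.obj i
  /-- compatibility with the differentials, for `0 ≤ i ≤ n` -/
  comm : ∀ i : ℕ, i ≤ n → f i ≫ Y.d i = X.d i ≫ f (i + 1)

/-- The identity morphism of complexes. -/
def NComplexHom.id (X : NComplex C n) : NComplexHom X X where
  f _ := 𝟙 _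
  comm _ _ := by simp

/-- Composition of morphisms of complexes (in diagrammatic order:
`f.comp g` is `g• ∘ f•`). -/
def NComplexHom.comp {X Y Z : NComplex C n} (f : NComplexHom X Y) (g : NComplexHom Y Z) :
    NComplexHom X Z where
  f i := f.f i ≫ g.f i
  comm i hi := by
    rw [Category.assoc, g.comm i hi, ← Category.assoc, f.comm i hi, Category.assoc]

/-- `φ` is a homotopy from `f` to `g`:  here `φ i : X^{i+1} ⟶ Y^i` plays the role of
the component `φ^{i+1}` (for `0 ≤ i ≤ n`, i.e. `1 ≤ i+1 ≤ n+1`). -/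
def IsHomotopy {X Y : NComplex C n} (f g : NComplexHom X Y)
    (φ : ∀ i : ℕ, X.obj (i + 1) ⟶ Y.obj i) : Prop :=
  (g.f 0 - f.f 0 = X.d 0 ≫ φ 0) ∧
    (∀ i : ℕ, i + 1 ≤ n →
      g.f (i + 1) - f.f (i + 1) = φ i ≫ Y.d i + X.d (i + 1) ≫ φ (i + 1)) ∧
    (g.f (n + 1) - f.f (n + 1) = φ n ≫ Y.d n)

/-- Two morphisms of complexes are homotopic. -/
def Homotopic {X Y : NComplex C n} (f g : NComplexHom X Y) : Prop :=
  ∃ φ, IsHomotopy f g φ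

/-- `g` is a homotopy inverse of `f`. -/
def IsHomotopyInverse {X Y : NComplex C n} (f : NComplexHom X Y) (g : NComplexHom Y X) : Prop :=
  Homotopic (f.comp g) (NComplexHom.id X) ∧ Homotopic (g.comp f) (NComplexHom.id Y)

/-- `f` is a homotopy equivalence of complexes. -/
def IsHomotopyEquiv {X Y : NComplex C n} (f : NComplexHom X Y) : Prop :=
  ∃ g, IsHomotopyInverse f g

/-- Exactness of a two-term sequence of (pointed) sets at the middle term:
the image of `f` equals the kernel of `g`. -/
def ExactAt {α β γ : Type*} [Zero γ] (f : α → β) (g : β → γ) : Prop :=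
  ∀ b : β, g b = 0 ↔ ∃ a : α, f a = b

end NExangulated
namespace NExangulated

variable {C : Type u} [Category.{v} C] [Preadditive C] [HasFiniteBiproducts C] {n : ℕ}

/-- If `f• : X• → Y•` is a homotopy equivalence of `(n+2)`-term
complexes with `X^0 = Y^0 = A` and `f^0 = id_A`, then `f•` admits a homotopy
inverse `g•` with `g^0 = id_A`. -/
theorem statement_0 (hn : 0 < n) (X Y : NComplex C n)
    (h0 : X.obj 0 = Y.obj 0)
    (f : NComplexHom X Y) (hf0 : f.f 0 = eqToHom h0)
    (hf : IsHomotopyEquiv f) :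
    ∃ g : NComplexHom Y X, IsHomotopyInverse f g ∧ g.f 0 = eqToHom h0.symm := by
  obtain ⟨m, rfl⟩ : ∃ m, n = m + 1 := ⟨n - 1, (Nat.succ_pred_eq_of_pos hn).symm⟩
  obtain ⟨g, ⟨φ, hφ1, hφ2, hφ3⟩, ⟨χ, hχ1, hχ2, hχ3⟩⟩ := hf
  simp only [NComplexHom.id, NComplexHom.comp] at hφ1 hφ2 hφ3 hχ1 hχ2 hχ3
  set ψ0 : Y.obj 1 ⟶ X.obj 0 := χ 0 ≫ eqToHom h0.symm with hψ0def
  have key : Y.d 0 ≫ ψ0 = eqToHom h0.symm - g.f 0 := by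
    rw [hψ0def, ← Category.assoc, ← hχ1, hf0]
    simp [Preadditive.sub_comp]
  let corr : ∀ i, Y.obj i ⟶ X.obj i := fun i =>
    match i with
    | 0 => Y.d 0 ≫ ψ0
    | 1 => ψ0 ≫ X.d 0
    | _+2 => 0
  let g' : NComplexHom Y X :=
  { f := fun i => g.f i + corr i
    comm := by
      intro i hi
      match i with
      | 0 =>
        show (g.f 0 + Y.d 0 ≫ ψ0) ≫ X.d 0 = Y.d 0 ≫ (g.f 1 + ψ0 ≫ X.d 0)
        rw [Preadditive.add_comp, Preadditive.comp_add, g.comm 0 (Nat.zero_le _),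
          Category.assoc]
      | 1 =>
        show (g.f 1 + ψ0 ≫ X.d 0) ≫ X.d 1 = Y.d 1 ≫ (g.f 2 + 0)
        rw [Preadditive.add_comp, Category.assoc, X.d_comp_d 0 (by omega),
          comp_zero, add_zero, g.comm 1 hi, add_zero]
      | (k+2) =>
        show (g.f (k+2) + 0) ≫ X.d (k+2) = Y.d (k+2) ≫ (g.f (k+3) + 0)
        rw [add_zero, add_zero, g.comm _ hi] }
  let ψ : ∀ i, Y.obj (i+1) ⟶ X.obj i := fun i =>
    match i with
    | 0 => ψ0
    | _+1 => 0
  refine ⟨g', ⟨⟨fun i => φ i - f.f (i+1) ≫ ψ i, ?_, ?_, ?_⟩,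
      ⟨fun i => χ i - ψ i ≫ f.f i, ?_, ?_, ?_⟩⟩, ?_⟩
  · -- deg 0 of f ∘ g' ~ id_X
    show 𝟙 (X.obj 0) - f.f 0 ≫ (g.f 0 + Y.d 0 ≫ ψ0) = X.d 0 ≫ (φ 0 - f.f 1 ≫ ψ0)
    have hc : f.f 0 ≫ Y.d 0 ≫ ψ0 = X.d 0 ≫ f.f 1 ≫ ψ0 := by
      rw [← Category.assoc, f.comm 0 (Nat.zero_le _), Category.assoc]
    rw [sub_eq_iff_eq_add] at hφ1
    rw [hφ1]
    simp only [Preadditive.comp_add, Preadditive.comp_sub, Category.assoc, hc]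
    abel
  · -- middle degrees of f ∘ g' ~ id_X
    intro i hi
    match i with
    | 0 =>
      show 𝟙 (X.obj 1) - f.f 1 ≫ (g.f 1 + ψ0 ≫ X.d 0) =
        (φ 0 - f.f 1 ≫ ψ0) ≫ X.d 0 + X.d 1 ≫ (φ 1 - f.f 2 ≫ 0)
      have h := hφ2 0 hi
      rw [sub_eq_iff_eq_add] at h
      rw [h]
      simp only [Preadditive.comp_add, Preadditive.sub_comp, Preadditive.comp_sub,
        comp_zero, sub_zero, Category.assoc]
      abel
    | (k+1) =>
      show 𝟙 (X.obj (k+2)) - f.f (k+2) ≫ (g.f (k+2) + 0) =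
        (φ (k+1) - f.f (k+2) ≫ 0) ≫ X.d (k+1) + X.d (k+2) ≫ (φ (k+2) - f.f (k+3) ≫ 0)
      simpa using hφ2 (k+1) hi
  · -- top degree of f ∘ g' ~ id_X
    show 𝟙 (X.obj (m+2)) - f.f (m+2) ≫ (g.f (m+2) + 0) =
      (φ (m+1) - f.f (m+2) ≫ 0) ≫ X.d (m+1)
    simpa using hφ3
  · -- deg 0 of g' ∘ f ~ id_Y
    show 𝟙 (Y.obj 0) - (g.f 0 + Y.d 0 ≫ ψ0) ≫ f.f 0 = Y.d 0 ≫ (χ 0 - ψ0 ≫ f.f 0)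
    rw [sub_eq_iff_eq_add] at hχ1
    rw [hχ1]
    simp only [Preadditive.add_comp, Preadditive.comp_sub, Category.assoc]
    abel
  · -- middle degrees of g' ∘ f ~ id_Y
    intro i hi
    match i with
    | 0 =>
      show 𝟙 (Y.obj 1) - (g.f 1 + ψ0 ≫ X.d 0) ≫ f.f 1 =
        (χ 0 - ψ0 ≫ f.f 0) ≫ Y.d 0 + Y.d 1 ≫ (χ 1 - 0 ≫ f.f 1)
      have h := hχ2 0 hi
      rw [sub_eq_iff_eq_add] at h
      rw [h]
      have hc : ψ0 ≫ X.d 0 ≫ f.f 1 = ψ0 ≫ f.f 0 ≫ Y.d 0 := by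
        rw [f.comm 0 (Nat.zero_le _)]
      simp only [Preadditive.add_comp, Preadditive.sub_comp, Preadditive.comp_sub,
        zero_comp, sub_zero, Category.assoc, hc]
      abel
    | (k+1) =>
      show 𝟙 (Y.obj (k+2)) - (g.f (k+2) + 0) ≫ f.f (k+2) =
        (χ (k+1) - 0 ≫ f.f (k+1)) ≫ Y.d (k+1) + Y.d (k+2) ≫ (χ (k+2) - 0 ≫ f.f (k+2))
      simpa using hχ2 (k+1) hi
  · -- top degree of g' ∘ f ~ id_Y
    show 𝟙 (Y.obj (m+2)) - (g.f (m+2) + 0) ≫ f.f (m+2) =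
      (χ (m+1) - 0 ≫ f.f (m+1)) ≫ Y.d (m+1)
    simpa using hχ3
  · show g.f 0 + Y.d 0 ≫ ψ0 = eqToHom h0.symm
    rw [key]
    abel

end NExangulated
end

section
/- Let n be a positive integer, C an additive category, E : C^op × C → Ab a biadditive functor, and f• : ⟨X•,δ⟩ → ⟨Y•,ρ⟩ a morphism of E-attached complexes. If a morphism of complexes f′• : X• → Y• is homotopic to f•, then f′• also satisfies (f′^0)_*δ = (f′^{n+1})^*ρ, i.e. f′• is a morphism of E-attached complexes ⟨X•,δ⟩ → ⟨Y•,ρ⟩. -/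
/-!
Basic definitions for the theory of `n`-exangulated categories
(Herschend–Liu–Nakaoka): `(n+2)`-term complexes in an additive category,
morphisms of such complexes, homotopies, and homotopy equivalences.

A complex is recorded as a function `obj : ℕ → C` together with differentials
`d i : obj i ⟶ obj (i+1)`; only the components in degrees `0, …, n+1`
(and the differentials `d 0, …, d n`) are relevant, which is why all
conditions are imposed only in that range.
-/

open CategoryTheory CategoryTheory.Limits Opposite

universe w v u

namespace NExangulated

variable {C : Type u} [Category.{v} C] [Preadditive C] {n : ℕ}

section E

variable (E : Cᵒᵖ ⥤ C ⥤ AddCommGrpCat.{w})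

/-- `a_*δ := E(id, a)(δ)`. -/
def pushE {A A' B : C} (a : A ⟶ A') (δ : (E.obj (op B)).obj A) : (E.obj (op B)).obj A' :=
  (E.obj (op B)).map a δ

/-- `c^*δ := E(c, id)(δ)`. -/
def pullE {A B B' : C} (c : B' ⟶ B) (δ : (E.obj (op B)).obj A) : (E.obj (op B')).obj A :=
  (E.map c.op).app A δ

/-- `⟨X, δ⟩` is an `E`-attached complex: `(d^0)_*δ = 0` and `(d^n)^*δ = 0`. -/
def IsAttached (X : NComplex C n) (δ : (E.obj (op (X.obj (n + 1)))).obj (X.obj 0)) : Prop :=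
  pushE E (X.d 0) δ = 0 ∧ pullE E (X.d n) δ = 0

/-- `⟨X, δ⟩` is an `n`-exangle: for every object `Q` the two induced sequences of
abelian groups
`C(Q,X^0) → ⋯ → C(Q,X^{n+1}) → E(Q,X^0)` and
`C(X^{n+1},Q) → ⋯ → C(X^0,Q) → E(X^{n+1},Q)`
are exact at every term having both an incoming and an outgoing map. -/
def IsExangle (X : NComplex C n) (δ : (E.obj (op (X.obj (n + 1)))).obj (X.obj 0)) : Prop :=
  (∀ Q : C,
      (∀ i : ℕ, i + 1 ≤ n →
        ExactAt (fun u : Q ⟶ X.obj i => u ≫ X.d i)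
          (fun u : Q ⟶ X.obj (i + 1) => u ≫ X.d (i + 1))) ∧
      ExactAt (fun u : Q ⟶ X.obj n => u ≫ X.d n)
        (fun u : Q ⟶ X.obj (n + 1) => pullE E u δ)) ∧
  (∀ Q : C,
      (∀ i : ℕ, i + 1 ≤ n →
        ExactAt (fun u : X.obj (i + 2) ⟶ Q => X.d (i + 1) ≫ u)
          (fun u : X.obj (i + 1) ⟶ Q => X.d i ≫ u)) ∧
      ExactAt (fun u : X.obj 1 ⟶ Q => X.d 0 ≫ u)
        (fun u : X.obj 0 ⟶ Q => pushE E u δ))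

end E

end NExangulated
namespace NExangulated

variable {C : Type u} [Category.{v} C] (E : Cᵒᵖ ⥤ C ⥤ AddCommGrpCat.{w})

section Push

variable {A A' A'' B : C}

theorem pushE_add [Preadditive C] [(E.obj (op B)).Additive] (a b : A ⟶ A')
    (δ : (E.obj (op B)).obj A) :
    pushE E (a + b) δ = pushE E a δ + pushE E b δ := by
  simp [pushE]

theorem pushE_comp (a : A ⟶ A') (b : A' ⟶ A'') (δ : (E.obj (op B)).obj A) :
    pushE E (a ≫ b) δ = pushE E b (pushE E a δ) := by
  simp [pushE]

theorem pushE_zero (a : A ⟶ A') : pushE E a (0 : (E.obj (op B)).obj A) = 0 :=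
  map_zero _

theorem pushE_add_comp_of_pushE_eq_zero [Preadditive C] [(E.obj (op B)).Additive]
    (a : A ⟶ A'') (d : A ⟶ A') (h : A' ⟶ A'')
    {δ : (E.obj (op B)).obj A} (hd : pushE E d δ = 0) :
    pushE E (a + d ≫ h) δ = pushE E a δ := by
  rw [pushE_add, pushE_comp, hd, pushE_zero, add_zero]

end Push

section Pull

variable {A B B' B'' : C}

theorem pullE_add [Preadditive C] [E.Additive] (a b : B' ⟶ B) (δ : (E.obj (op B)).obj A) :
    pullE E (a + b) δ = pullE E a δ + pullE E b δ := by
  simp [pullE]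

theorem pullE_comp (a : B'' ⟶ B') (b : B' ⟶ B) (δ : (E.obj (op B)).obj A) :
    pullE E (a ≫ b) δ = pullE E a (pullE E b δ) := by
  simp [pullE]

theorem pullE_zero (a : B' ⟶ B) : pullE E a (0 : (E.obj (op B)).obj A) = 0 :=
  map_zero _

theorem pullE_add_comp_of_pullE_eq_zero [Preadditive C] [E.Additive]
    (a : B'' ⟶ B) (h : B'' ⟶ B') (d : B' ⟶ B)
    {δ : (E.obj (op B)).obj A} (hd : pullE E d δ = 0) :
    pullE E (a + h ≫ d) δ = pullE E a δ := by
  rw [pullE_add, pullE_comp, hd, pullE_zero, add_zero]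

end Pull

variable [Preadditive C] {n : ℕ} {X Y : NComplex C n} {f g : NComplexHom X Y}
  {φ : ∀ i : ℕ, X.obj (i + 1) ⟶ Y.obj i}

theorem IsHomotopy.f_zero_eq (h : IsHomotopy f g φ) : g.f 0 = f.f 0 + X.d 0 ≫ φ 0 :=
  eq_add_of_sub_eq' h.1

theorem IsHomotopy.f_last_eq (h : IsHomotopy f g φ) : g.f (n + 1) = f.f (n + 1) + φ n ≫ Y.d n :=
  eq_add_of_sub_eq' h.2.2

end NExangulated
namespace NExangulated

variable {C : Type u} [Category.{v} C] [Preadditive C] [HasFiniteBiproducts C] {n : ℕ}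

/-- If `f• : ⟨X•,δ⟩ → ⟨Y•,ρ⟩` is a morphism of `E`-attached
complexes and `f'• : X• → Y•` is a morphism of complexes homotopic to `f•`,
then `f'•` satisfies `(f'^0)_*δ = (f'^{n+1})^*ρ` as well. -/
theorem statement_2 (hn : 0 < n) (E : Cᵒᵖ ⥤ C ⥤ AddCommGrpCat.{w})
    [E.Additive] [∀ B : Cᵒᵖ, (E.obj B).Additive]
    (X Y : NComplex C n)
    (δ : (E.obj (op (X.obj (n + 1)))).obj (X.obj 0))
    (ρ : (E.obj (op (Y.obj (n + 1)))).obj (Y.obj 0))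
    (hX : IsAttached E X δ) (hY : IsAttached E Y ρ)
    (f f' : NComplexHom X Y)
    (hf : pushE E (f.f 0) δ = pullE E (f.f (n + 1)) ρ)
    (hff' : Homotopic f f') :
    pushE E (f'.f 0) δ = pullE E (f'.f (n + 1)) ρ := by
  obtain ⟨φ, hφ⟩ := hff'
  rw [hφ.f_zero_eq, hφ.f_last_eq, pushE_add_comp_of_pushE_eq_zero E _ _ _ hX.1,
    pullE_add_comp_of_pullE_eq_zero E _ _ _ hY.2, hf]

end NExangulated
end

section
/- Let n be a positive integer, C an additive category, E : C^op × C → Ab a biadditive functor, and ⟨X•,δ⟩ an n-exangle with X^0 = A and X^{n+1} = C. Then the following are equivalent: (1) δ = 0 in E(C,A); (2) there exists r : X^1 → A with r∘d_X^0 = id_A; (3) there exists s : C → X^n with d_X^n∘s = id_C. -/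
/-!
Basic definitions for the theory of `n`-exangulated categories
(Herschend–Liu–Nakaoka): `(n+2)`-term complexes in an additive category,
morphisms of such complexes, homotopies, and homotopy equivalences.

A complex is recorded as a function `obj : ℕ → C` together with differentials
`d i : obj i ⟶ obj (i+1)`; only the components in degrees `0, …, n+1`
(and the differentials `d 0, …, d n`) are relevant, which is why all
conditions are imposed only in that range.
-/

open CategoryTheory CategoryTheory.Limits Opposite

universe w v u

/-!
Exactness of `C(X^1, A) → C(X^0, A) → E(C, A)` at `𝟙_A` says that `δ = (𝟙_A)_*δ` vanishes
exactly when `𝟙_A` factors through `d_X^0`; dually, exactness of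
`C(C, X^n) → C(C, C) → E(C, A)` at `𝟙_C` handles the section of `d_X^n`.
-/

namespace NExangulated

variable {C : Type u} [Category.{v} C] [Preadditive C] {n : ℕ}
  (E : Cᵒᵖ ⥤ C ⥤ AddCommGrpCat.{w})

@[simp]
lemma pushE_id {A B : C} (δ : (E.obj (op B)).obj A) : pushE E (𝟙 A) δ = δ := by
  simp [pushE]

@[simp]
lemma pullE_id {A B : C} (δ : (E.obj (op B)).obj A) : pullE E (𝟙 B) δ = δ := by
  simp [pullE]

variable {E} {X : NComplex C n} {δ : (E.obj (op (X.obj (n + 1)))).obj (X.obj 0)}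

lemma IsExangle.eq_zero_iff_exists_retraction (hX : IsExangle E X δ) :
    δ = 0 ↔ ∃ r : X.obj 1 ⟶ X.obj 0, X.d 0 ≫ r = 𝟙 (X.obj 0) := by
  simpa using (hX.2 (X.obj 0)).2 (𝟙 (X.obj 0))

lemma IsExangle.eq_zero_iff_exists_section (hX : IsExangle E X δ) :
    δ = 0 ↔ ∃ s : X.obj (n + 1) ⟶ X.obj n, s ≫ X.d n = 𝟙 (X.obj (n + 1)) := by
  simpa using (hX.1 (X.obj (n + 1))).2 (𝟙 (X.obj (n + 1)))

end NExangulated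
namespace NExangulated

variable {C : Type u} [Category.{v} C] [Preadditive C] [HasFiniteBiproducts C] {n : ℕ}

/-- For an `n`-exangle `⟨X•,δ⟩` with `X^0 = A`, `X^{n+1} = C`,
the following are equivalent: `δ = 0`; `d_X^0` has a retraction; `d_X^n` has a
section. -/
theorem statement_5 (hn : 0 < n) (E : Cᵒᵖ ⥤ C ⥤ AddCommGrpCat.{w})
    [E.Additive] [∀ B : Cᵒᵖ, (E.obj B).Additive]
    (X : NComplex C n)
    (δ : (E.obj (op (X.obj (n + 1)))).obj (X.obj 0))
    (hXatt : IsAttached E X δ) (hX : IsExangle E X δ) :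
    (δ = 0 ↔ ∃ r : X.obj 1 ⟶ X.obj 0, X.d 0 ≫ r = 𝟙 (X.obj 0)) ∧
    (δ = 0 ↔ ∃ s : X.obj (n + 1) ⟶ X.obj n, s ≫ X.d n = 𝟙 (X.obj (n + 1))) :=
  ⟨hX.eq_zero_iff_exists_retraction, hX.eq_zero_iff_exists_section⟩

end NExangulated
end

section
/- Let n be a positive integer, C an additive category, E : C^op × C → Ab a biadditive functor, A, C objects of C, and δ ∈ E(C,A). Let ⟨X•,δ⟩ and ⟨Y•,δ⟩ be n-exangles with X^0 = Y^0 = A and X^{n+1} = Y^{n+1} = C, and let f• : X• → Y• be a morphism of complexes with f^0 = id_A and f^{n+1} = id_C. If there exists at least one morphism of complexes y• : Y• → X• with y^0 = id_A and y^{n+1} = id_C, then f• is a homotopy equivalence in C_{(A,C)}, i.e. there exists g• : Y• → X• with g^0 = id_A, g^{n+1} = id_C, such that g•∘f• and f•∘g• are homotopic to the respective identities. -/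
/-!
Basic definitions for the theory of `n`-exangulated categories
(Herschend–Liu–Nakaoka): `(n+2)`-term complexes in an additive category,
morphisms of such complexes, homotopies, and homotopy equivalences.

A complex is recorded as a function `obj : ℕ → C` together with differentials
`d i : obj i ⟶ obj (i+1)`; only the components in degrees `0, …, n+1`
(and the differentials `d 0, …, d n`) are relevant, which is why all
conditions are imposed only in that range.
-/

open CategoryTheory CategoryTheory.Limits Opposite

universe w v u

/-!
Since `⟨X•,δ⟩` and `⟨Y•,δ⟩` share their ends, `y• ∘ f•` and `f• ∘ y•` are endomorphisms of
`n`-exangles that are the identity at both ends, so it suffices to invert such an endomorphism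
`e = 1 - t` up to homotopy. As `t` vanishes at both ends, exactness of
`C(Z^{i+1}, Z^i) → C(Z^{i+1}, Z^{i+1}) → C(Z^{i+1}, Z^{i+2})` lets one build, downwards from
degree `n`, maps `ψ` with `t = ψ d + d ψ` in all degrees except `0`. Then `ψ t` is an honest
homotopy from `1 - t² = (1 + t) e = e (1 + t)` to `1`, so `1 + t` is a homotopy inverse of `e`.
Thus `f•` has a homotopy right inverse and a homotopy left inverse, and these agree up to homotopy.
-/

namespace NExangulated

section

variable {C : Type u} [Category.{v} C] [Preadditive C] {n : ℕ}

namespace NComplexHom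

variable {W X Y Z : NComplex C n}

@[ext]
lemma ext {f g : NComplexHom X Y} (h : ∀ i, f.f i = g.f i) : f = g := by
  cases f; cases g; congr; funext i; exact h i

@[simp]
lemma id_f (i : ℕ) : (NComplexHom.id X).f i = 𝟙 _ := rfl

@[simp]
lemma comp_f (f : NComplexHom X Y) (g : NComplexHom Y Z) (i : ℕ) :
    (f.comp g).f i = f.f i ≫ g.f i := rfl

@[simp]
lemma id_comp (f : NComplexHom X Y) : (NComplexHom.id X).comp f = f := by ext; simp

@[simp]
lemma comp_id (f : NComplexHom X Y) : f.comp (NComplexHom.id Y) = f := by ext; simp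

lemma comp_assoc (f : NComplexHom W X) (g : NComplexHom X Y) (h : NComplexHom Y Z) :
    (f.comp g).comp h = f.comp (g.comp h) := by ext; simp

end NComplexHom

namespace Homotopic

variable {X Y Z : NComplex C n}

lemma symm {f g : NComplexHom X Y} (h : Homotopic f g) : Homotopic g f := by
  obtain ⟨φ, h0, hmid, htop⟩ := h
  refine ⟨fun i => -φ i, ?_, fun i hi => ?_, ?_⟩
  · rw [← neg_sub, h0, Preadditive.comp_neg]
  · rw [← neg_sub, hmid i hi, neg_add, Preadditive.neg_comp, Preadditive.comp_neg]
  · rw [← neg_sub, htop, Preadditive.neg_comp]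

lemma trans {f g h : NComplexHom X Y} (hfg : Homotopic f g) (hgh : Homotopic g h) :
    Homotopic f h := by
  obtain ⟨φ, a0, amid, atop⟩ := hfg
  obtain ⟨χ, b0, bmid, btop⟩ := hgh
  refine ⟨fun i => φ i + χ i, ?_, fun i hi => ?_, ?_⟩
  · rw [← sub_add_sub_cancel', a0, b0, Preadditive.comp_add, add_comm]
  · rw [← sub_add_sub_cancel', amid i hi, bmid i hi, Preadditive.comp_add, Preadditive.add_comp]
    abel
  · rw [← sub_add_sub_cancel', atop, btop, Preadditive.add_comp]

lemma comp_left (u : NComplexHom X Y) {f g : NComplexHom Y Z} (h : Homotopic f g) :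
    Homotopic (u.comp f) (u.comp g) := by
  obtain ⟨φ, h0, hmid, htop⟩ := h
  refine ⟨fun i => u.f (i + 1) ≫ φ i, ?_, fun i hi => ?_, ?_⟩
  · simp only [NComplexHom.comp_f, ← Preadditive.comp_sub, h0, ← Category.assoc,
      u.comm 0 (Nat.zero_le n)]
  · simp only [NComplexHom.comp_f, ← Preadditive.comp_sub, hmid i hi, Preadditive.comp_add,
      ← Category.assoc, u.comm (i + 1) hi]
  · simp only [NComplexHom.comp_f, ← Preadditive.comp_sub, htop, Category.assoc]

lemma comp_right {f g : NComplexHom X Y} (h : Homotopic f g) (v : NComplexHom Y Z) :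
    Homotopic (f.comp v) (g.comp v) := by
  obtain ⟨φ, h0, hmid, htop⟩ := h
  refine ⟨fun i => φ i ≫ v.f i, ?_, fun i hi => ?_, ?_⟩
  · simp only [NComplexHom.comp_f, ← Preadditive.sub_comp, h0, Category.assoc]
  · simp only [NComplexHom.comp_f, ← Preadditive.sub_comp, hmid i hi, Preadditive.add_comp,
      Category.assoc, v.comm i (Nat.le_of_succ_le hi)]
  · simp only [NComplexHom.comp_f, ← Preadditive.sub_comp, htop, Category.assoc,
      v.comm n le_rfl]

end Homotopic

instance {X Y : NComplex C n} :
    Trans (@Homotopic C _ _ n X Y) (@Homotopic C _ _ n X Y) (@Homotopic C _ _ n X Y) :=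
  ⟨Homotopic.trans⟩

lemma isHomotopyInverse_of_homotopic_id {X Y : NComplex C n} {f : NComplexHom X Y}
    {g h : NComplexHom Y X} (hg : Homotopic (f.comp g) (NComplexHom.id X))
    (hh : Homotopic (h.comp f) (NComplexHom.id Y)) : IsHomotopyInverse f g := by
  have hgh : Homotopic g h :=
    calc g = (NComplexHom.id Y).comp g := (NComplexHom.id_comp g).symm
      Homotopic _ ((h.comp f).comp g) := (hh.comp_right g).symm
      _ = h.comp (f.comp g) := NComplexHom.comp_assoc h f g
      Homotopic _ (h.comp (NComplexHom.id X)) := hg.comp_left h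
      _ = h := NComplexHom.comp_id h
  exact ⟨hg, (hgh.comp_right f).trans hh⟩

/-- Exactness of `C(Z^{i+1}, Z^i) → C(Z^{i+1}, Z^{i+1}) → C(Z^{i+1}, Z^{i+2})` for `0 ≤ i < n`. -/
def NComplex.ExactOnEndos (Z : NComplex C n) : Prop :=
  ∀ i, i + 1 ≤ n → ∀ u : Z.obj (i + 1) ⟶ Z.obj (i + 1), u ≫ Z.d (i + 1) = 0 →
    ∃ a : Z.obj (i + 1) ⟶ Z.obj i, a ≫ Z.d i = u

lemma IsExangle.exactOnEndos {E : Cᵒᵖ ⥤ C ⥤ AddCommGrpCat.{w}} {X : NComplex C n}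
    {δ : (E.obj (op (X.obj (n + 1)))).obj (X.obj 0)} (hX : IsExangle E X δ) :
    X.ExactOnEndos :=
  fun i hi u hu => ((hX.1 _).1 i hi u).1 hu

lemma exists_partial_homotopy {Z : NComplex C n}
    (hZ : Z.ExactOnEndos) (t : ∀ i, Z.obj i ⟶ Z.obj i)
    (ht : ∀ i, i ≤ n → t i ≫ Z.d i = Z.d i ≫ t (i + 1)) (htop : t (n + 1) = 0) :
    ∃ ψ : ∀ i, Z.obj (i + 1) ⟶ Z.obj i, ψ n = 0 ∧
      ∀ i, i + 1 ≤ n → t (i + 1) = ψ i ≫ Z.d i + Z.d (i + 1) ≫ ψ (i + 1) := by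
  -- Asking `ψ` to vanish in all degrees `≥ n` makes the equation hold trivially at `i = n`,
  -- which starts the downward induction.
  suffices ∀ k ≤ n, ∃ ψ : ∀ i, Z.obj (i + 1) ⟶ Z.obj i, (∀ i, n ≤ i → ψ i = 0) ∧
      ∀ i, k ≤ i → i ≤ n → t (i + 1) = ψ i ≫ Z.d i + Z.d (i + 1) ≫ ψ (i + 1) by
    obtain ⟨ψ, hψn, hψ⟩ := this 0 n.zero_le
    exact ⟨ψ, hψn n le_rfl, fun i hi => hψ i i.zero_le (by omega)⟩
  intro k hk
  induction hk using Nat.decreasingInduction with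
  | self =>
    refine ⟨fun _ => 0, fun _ _ => rfl, fun i hi hi' => ?_⟩
    obtain rfl : i = n := by omega
    simp [htop]
  | of_succ k hk ih =>
    obtain ⟨ψ, hψn, hψ⟩ := ih
    have hkill : (t (k + 1) - Z.d (k + 1) ≫ ψ (k + 1)) ≫ Z.d (k + 1) = 0 := by
      have hdd : Z.d (k + 1) ≫ Z.d (k + 2) ≫ ψ (k + 2) = 0 := by
        rcases Nat.lt_or_ge (k + 1) n with hlt | hge
        · rw [← Category.assoc, Z.d_comp_d (k + 1) hlt, zero_comp]
        · rw [hψn (k + 2) (by omega), comp_zero, comp_zero]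
      rw [Preadditive.sub_comp, ht (k + 1) hk, hψ (k + 1) le_rfl hk, Preadditive.comp_add,
        hdd, Category.assoc, add_zero, sub_self]
    obtain ⟨a, ha⟩ := hZ k hk _ hkill
    refine ⟨Function.update ψ k a, fun i hi => ?_, fun i hi hi' => ?_⟩
    · rw [Function.update_of_ne (by omega), hψn i hi]
    · rw [Function.update_of_ne (show i + 1 ≠ k by omega)]
      rcases hi.eq_or_lt with rfl | hlt
      · rw [Function.update_self, ha, sub_add_cancel]
      · rw [Function.update_of_ne (by omega), hψ i hlt hi']

lemma homotopic_id_of_id_sub_eq_sq {Z : NComplex C n} (hZ : Z.ExactOnEndos)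
    (t : ∀ i, Z.obj i ⟶ Z.obj i) (ht : ∀ i, i ≤ n → t i ≫ Z.d i = Z.d i ≫ t (i + 1))
    (ht0 : t 0 = 0) (htop : t (n + 1) = 0) (w : NComplexHom Z Z)
    (hw : ∀ i, 𝟙 _ - w.f i = t i ≫ t i) : Homotopic w (NComplexHom.id Z) := by
  obtain ⟨ψ, hψtop, hψ⟩ := exists_partial_homotopy hZ t ht htop
  refine ⟨fun i => ψ i ≫ t i, ?_, fun i hi => ?_, ?_⟩
  · simp [hw, ht0]
  · rw [NComplexHom.id_f, hw]
    nth_rw 1 [hψ i hi]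
    rw [Preadditive.add_comp, Category.assoc, Category.assoc, ← ht i (by omega)]
    simp only [Category.assoc]
  · simp [hw, htop, hψtop]

lemma NComplexHom.exists_isHomotopyInverse {Z : NComplex C n} (hZ : Z.ExactOnEndos)
    (e : NComplexHom Z Z) (he0 : e.f 0 = 𝟙 _) (hetop : e.f (n + 1) = 𝟙 _) :
    ∃ e' : NComplexHom Z Z, e'.f 0 = 𝟙 _ ∧ e'.f (n + 1) = 𝟙 _ ∧ IsHomotopyInverse e e' := by
  set t : ∀ i, Z.obj i ⟶ Z.obj i := fun i => 𝟙 _ - e.f i with ht_def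
  have ht : ∀ i, i ≤ n → t i ≫ Z.d i = Z.d i ≫ t (i + 1) := fun i hi => by
    simp only [ht_def, Preadditive.sub_comp, Preadditive.comp_sub, Category.id_comp,
      Category.comp_id, e.comm i hi]
  have ht0 : t 0 = 0 := by simp [ht_def, he0]
  have htop : t (n + 1) = 0 := by simp [ht_def, hetop]
  let e' : NComplexHom Z Z :=
    ⟨fun i => 𝟙 _ + t i, fun i hi => by
      simp only [Preadditive.add_comp, Preadditive.comp_add, Category.id_comp,
        Category.comp_id, ht i hi]⟩
  refine ⟨e', by simp [e', ht0], by simp [e', htop], ?_, ?_⟩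
  · refine homotopic_id_of_id_sub_eq_sq hZ t ht ht0 htop _ fun i => ?_
    simp only [NComplexHom.comp_f, e', ht_def, Preadditive.comp_add, Preadditive.comp_sub,
      Preadditive.sub_comp, Category.comp_id, Category.id_comp]
    abel
  · refine homotopic_id_of_id_sub_eq_sq hZ t ht ht0 htop _ fun i => ?_
    simp only [NComplexHom.comp_f, e', ht_def, Preadditive.add_comp, Preadditive.comp_sub,
      Preadditive.sub_comp, Category.comp_id, Category.id_comp]
    abel

end

end NExangulated
namespace NExangulated

variable {C : Type u} [Category.{v} C] [Preadditive C] [HasFiniteBiproducts C] {n : ℕ}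

/-- Let `⟨X•,δ⟩` and `⟨Y•,δ⟩` be `n`-exangles with the same
ends `A`, `C` and the same extension `δ`, and let `f• : X• → Y•` be a morphism
of complexes with `f^0 = id_A`, `f^{n+1} = id_C`.  If there exists at least one
morphism of complexes `Y• → X•` with identity end components, then `f•` is a
homotopy equivalence in `C_{(A,C)}`. -/
theorem statement_8 (hn : 0 < n) (E : Cᵒᵖ ⥤ C ⥤ AddCommGrpCat.{w})
    [E.Additive] [∀ B : Cᵒᵖ, (E.obj B).Additive]
    (X Y : NComplex C n)
    (h0 : Y.obj 0 = X.obj 0) (htop : Y.obj (n + 1) = X.obj (n + 1))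
    (δ : (E.obj (op (X.obj (n + 1)))).obj (X.obj 0))
    (hXe : IsExangle E X δ)
    (hYe : IsExangle E Y (pullE E (eqToHom htop) (pushE E (eqToHom h0.symm) δ)))
    (f : NComplexHom X Y)
    (hf0 : f.f 0 = eqToHom h0.symm) (hftop : f.f (n + 1) = eqToHom htop.symm)
    (y : NComplexHom Y X)
    (hy0 : y.f 0 = eqToHom h0) (hytop : y.f (n + 1) = eqToHom htop) :
    ∃ g : NComplexHom Y X, g.f 0 = eqToHom h0 ∧ g.f (n + 1) = eqToHom htop ∧
      Homotopic (f.comp g) (NComplexHom.id X) ∧ Homotopic (g.comp f) (NComplexHom.id Y) := by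
  obtain ⟨x', hx'0, hx'top, hx'⟩ := (f.comp y).exists_isHomotopyInverse hXe.exactOnEndos
    (by simp [hf0, hy0]) (by simp [hftop, hytop])
  obtain ⟨y', -, -, hy'⟩ := (y.comp f).exists_isHomotopyInverse hYe.exactOnEndos
    (by simp [hf0, hy0]) (by simp [hftop, hytop])
  refine ⟨y.comp x', by simp [hy0, hx'0], by simp [hytop, hx'top], ?_⟩
  refine isHomotopyInverse_of_homotopic_id (h := y'.comp y) ?_ ?_
  · rw [← NComplexHom.comp_assoc]; exact hx'.1
  · rw [NComplexHom.comp_assoc]; exact hy'.2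

end NExangulated
end

section
/- Let C be an additive category and A, C objects of C. Let X• = (A →(d_X^0) X^1 →(d_X^1) C) and Y• = (A →(d_Y^0) Y^1 →(d_Y^1) C) be 3-term complexes such that for every object Q of C the sequences C(Q,A) → C(Q,X^1) → C(Q,C) and C(C,Q) → C(X^1,Q) → C(A,Q) (maps induced by the differentials) are exact at the middle term, and similarly for Y•. Then for any morphism of complexes f• = (id_A, f^1, id_C) : X• → Y•, the following are equivalent: (1) f• is a homotopy equivalence in C_{(A,C)}; (2) f• is an isomorphism of complexes; (3) f^1 is an isomorphism in C. -/
/-!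
Basic definitions for the theory of `n`-exangulated categories
(Herschend–Liu–Nakaoka): `(n+2)`-term complexes in an additive category,
morphisms of such complexes, homotopies, and homotopy equivalences.

A complex is recorded as a function `obj : ℕ → C` together with differentials
`d i : obj i ⟶ obj (i+1)`; only the components in degrees `0, …, n+1`
(and the differentials `d 0, …, d n`) are relevant, which is why all
conditions are imposed only in that range.
-/

open CategoryTheory CategoryTheory.Limits Opposite

universe w v u

namespace NExangulated

variable {C : Type u} [Category.{v} C] [Preadditive C] [HasFiniteBiproducts C]

@[simp] lemma NComplexHom.comp_f' {n : ℕ} {X Y Z : NComplex C n} (f : NComplexHom X Y)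
    (g : NComplexHom Y Z) (i : ℕ) : (f.comp g).f i = f.f i ≫ g.f i := rfl

@[simp] lemma NComplexHom.id_f' {n : ℕ} (X : NComplex C n) (i : ℕ) :
    (NComplexHom.id X).f i = 𝟙 (X.obj i) := rfl

lemma nilpotent_isIso {Z : C} (u v : Z ⟶ Z) (hu : u ≫ u = 0) (huv : u ≫ v = 0)
    (hv : v ≫ v = 0) : IsIso (𝟙 Z - (u + v)) := by
  have hu' := reassoc_of% hu
  have huv' := reassoc_of% huv
  have hv' := reassoc_of% hv
  refine ⟨𝟙 Z + (u + v) + v ≫ u, ?_, ?_⟩ <;>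
  · simp only [Preadditive.comp_add, Preadditive.add_comp, Preadditive.sub_comp,
      Preadditive.comp_sub, Category.comp_id, Category.id_comp, Category.assoc,
      hu, huv, hv, hu', huv', hv', comp_zero, zero_comp]
    abel

lemma isIso_of_comps {Z W : C} (h : Z ⟶ W) (r : W ⟶ Z)
    (h1 : IsIso (h ≫ r)) (h2 : IsIso (r ≫ h)) : IsIso h := by
  have e : r ≫ inv (h ≫ r) = inv (r ≫ h) ≫ r := by
    rw [← cancel_epi (r ≫ h), IsIso.hom_inv_id_assoc, Category.assoc,
      ← Category.assoc h r, IsIso.hom_inv_id, Category.comp_id]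
  refine ⟨r ≫ inv (h ≫ r), by rw [← Category.assoc, IsIso.hom_inv_id], ?_⟩
  rw [e, Category.assoc, IsIso.inv_hom_id]

/-- the case `n = 1`.  For 3-term complexes `X•`, `Y•` with ends
`A`, `C` satisfying the stated exactness conditions, and a morphism
`f• = (id_A, f^1, id_C) : X• → Y•`, the following are equivalent:
(1) `f•` is a homotopy equivalence in `C_{(A,C)}`;
(2) `f•` is an isomorphism of complexes;
(3) `f^1` is an isomorphism in `C`. -/
theorem statement_14 (A Cc : C) (X Y : NComplex C 1)
    (hX0 : X.obj 0 = A) (hX2 : X.obj 2 = Cc)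
    (hY0 : Y.obj 0 = A) (hY2 : Y.obj 2 = Cc)
    (hXex1 : ∀ Q : C, ExactAt (fun u : Q ⟶ X.obj 0 => u ≫ X.d 0)
      (fun u : Q ⟶ X.obj 1 => u ≫ X.d 1))
    (hXex2 : ∀ Q : C, ExactAt (fun u : X.obj 2 ⟶ Q => X.d 1 ≫ u)
      (fun u : X.obj 1 ⟶ Q => X.d 0 ≫ u))
    (hYex1 : ∀ Q : C, ExactAt (fun u : Q ⟶ Y.obj 0 => u ≫ Y.d 0)
      (fun u : Q ⟶ Y.obj 1 => u ≫ Y.d 1))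
    (hYex2 : ∀ Q : C, ExactAt (fun u : Y.obj 2 ⟶ Q => Y.d 1 ≫ u)
      (fun u : Y.obj 1 ⟶ Q => Y.d 0 ≫ u))
    (f : NComplexHom X Y)
    (hf0 : f.f 0 = eqToHom (hX0.trans hY0.symm))
    (hf2 : f.f 2 = eqToHom (hX2.trans hY2.symm)) :
    ((∃ g : NComplexHom Y X, g.f 0 = eqToHom (hY0.trans hX0.symm) ∧
        g.f 2 = eqToHom (hY2.trans hX2.symm) ∧
        Homotopic (f.comp g) (NComplexHom.id X) ∧
        Homotopic (g.comp f) (NComplexHom.id Y)) ↔ IsIso (f.f 1)) ∧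
    ((∃ g : NComplexHom Y X, ∀ i : ℕ, i ≤ 2 →
        (f.f i ≫ g.f i = 𝟙 (X.obj i) ∧ g.f i ≫ f.f i = 𝟙 (Y.obj i))) ↔ IsIso (f.f 1)) := by
  -- Construction of a strict inverse from `IsIso (f.f 1)`
  have key : IsIso (f.f 1) →
      ∃ g : NComplexHom Y X, g.f 0 = eqToHom (hY0.trans hX0.symm) ∧
        (f.f 1 ≫ g.f 1 = 𝟙 (X.obj 1) ∧ g.f 1 ≫ f.f 1 = 𝟙 (Y.obj 1)) ∧
        g.f 2 = eqToHom (hY2.trans hX2.symm) := by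
    intro h
    haveI := h
    refine ⟨⟨fun i => match i with
      | 0 => eqToHom (hY0.trans hX0.symm)
      | 1 => inv (f.f 1)
      | 2 => eqToHom (hY2.trans hX2.symm)
      | (k+3) => 0, ?_⟩, rfl, ⟨IsIso.hom_inv_id _, IsIso.inv_hom_id _⟩, rfl⟩
    intro i hi
    interval_cases i
    · have c := f.comm 0 (by norm_num)
      rw [hf0] at c
      show eqToHom (hY0.trans hX0.symm) ≫ X.d 0 = Y.d 0 ≫ inv (f.f 1)
      rw [← cancel_mono (f.f 1)]
      simp [← c]
    · have c := f.comm 1 (by norm_num)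
      rw [hf2] at c
      show inv (f.f 1) ≫ X.d 1 = Y.d 1 ≫ eqToHom (hY2.trans hX2.symm)
      rw [← cancel_epi (f.f 1)]
      rw [IsIso.hom_inv_id_assoc, ← Category.assoc, c, Category.assoc,
        eqToHom_trans, eqToHom_refl, Category.comp_id]
  -- Homotopy equivalence implies `IsIso (f.f 1)`
  have fwd : (∃ g : NComplexHom Y X, g.f 0 = eqToHom (hY0.trans hX0.symm) ∧
        g.f 2 = eqToHom (hY2.trans hX2.symm) ∧
        Homotopic (f.comp g) (NComplexHom.id X) ∧
        Homotopic (g.comp f) (NComplexHom.id Y)) → IsIso (f.f 1) := by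
    rintro ⟨g, hg0, hg2, ⟨φ, hφ1, hφ2, hφ3⟩, ⟨ψ, hψ1, hψ2, hψ3⟩⟩
    simp only [NComplexHom.comp_f', NComplexHom.id_f'] at hφ1 hφ2 hφ3 hψ1 hψ2 hψ3
    rw [hf0, hg0, eqToHom_trans, eqToHom_refl, sub_self] at hφ1
    rw [hf2, hg2, eqToHom_trans, eqToHom_refl, sub_self] at hφ3
    rw [hg0, hf0, eqToHom_trans, eqToHom_refl, sub_self] at hψ1
    rw [hg2, hf2, eqToHom_trans, eqToHom_refl, sub_self] at hψ3
    have hφ2' := hφ2 0 le_rfl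
    have hψ2' := hψ2 0 le_rfl
    have h1 : IsIso (f.f 1 ≫ g.f 1) := by
      have : f.f 1 ≫ g.f 1 = 𝟙 (X.obj 1) - (φ 0 ≫ X.d 0 + X.d 1 ≫ φ 1) := by
        rw [← hφ2']; abel
      rw [this]
      refine nilpotent_isIso _ _ ?_ ?_ ?_
      · rw [Category.assoc, ← Category.assoc (X.d 0), ← hφ1]; simp
      · rw [Category.assoc, ← Category.assoc (X.d 0), X.d_comp_d 0 le_rfl]; simp
      · rw [Category.assoc, ← Category.assoc (φ 1), ← hφ3]; simp
    have h2 : IsIso (g.f 1 ≫ f.f 1) := by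
      have : g.f 1 ≫ f.f 1 = 𝟙 (Y.obj 1) - (ψ 0 ≫ Y.d 0 + Y.d 1 ≫ ψ 1) := by
        rw [← hψ2']; abel
      rw [this]
      refine nilpotent_isIso _ _ ?_ ?_ ?_
      · rw [Category.assoc, ← Category.assoc (Y.d 0), ← hψ1]; simp
      · rw [Category.assoc, ← Category.assoc (Y.d 0), Y.d_comp_d 0 le_rfl]; simp
      · rw [Category.assoc, ← Category.assoc (ψ 1), ← hψ3]; simp
    exact isIso_of_comps _ _ h1 h2
  constructor
  · constructor
    · exact fwd
    · intro h
      haveI := h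
      obtain ⟨g, hg0, ⟨hg1a, hg1b⟩, hg2⟩ := key h
      refine ⟨g, hg0, hg2, ⟨fun _ => 0, ?_, ?_, ?_⟩, ⟨fun _ => 0, ?_, ?_, ?_⟩⟩
      · simp [hf0, hg0]
      · intro i hi; obtain rfl : i = 0 := (by omega); simp [hg1a]
      · simp [hf2, hg2]
      · simp [hf0, hg0]
      · intro i hi; obtain rfl : i = 0 := (by omega); simp [hg1b]
      · simp [hf2, hg2]
  · constructor
    · rintro ⟨g, hg⟩
      obtain ⟨h1, h2⟩ := hg 1 (by norm_num)
      exact ⟨g.f 1, h1, h2⟩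
    · intro h
      haveI := h
      obtain ⟨g, hg0, ⟨hg1a, hg1b⟩, hg2⟩ := key h
      refine ⟨g, fun i hi => ?_⟩
      interval_cases i
      · exact ⟨by simp [hf0, hg0], by simp [hf0, hg0]⟩
      · exact ⟨hg1a, hg1b⟩
      · exact ⟨by simp [hf2, hg2], by simp [hf2, hg2]⟩

end NExangulated
end

section
/- Let n be a positive integer and C an additive category. Let X• and Y• be n-exact sequences in C, let k ∈ {0,…,n}, and let a : X^k → Y^k, b : X^{k+1} → Y^{k+1} be morphisms with b∘d_X^k = d_Y^k∘a. Then there exists a morphism of complexes f• : X• → Y• with f^k = a and f^{k+1} = b; any two such morphisms are homotopic; and if both a and b are isomorphisms, then any such f• is a homotopy equivalence of complexes. -/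
/-!
Basic definitions for the theory of `n`-exangulated categories
(Herschend–Liu–Nakaoka): `(n+2)`-term complexes in an additive category,
morphisms of such complexes, homotopies, and homotopy equivalences.

A complex is recorded as a function `obj : ℕ → C` together with differentials
`d i : obj i ⟶ obj (i+1)`; only the components in degrees `0, …, n+1`
(and the differentials `d 0, …, d n`) are relevant, which is why all
conditions are imposed only in that range.
-/

open CategoryTheory CategoryTheory.Limits Opposite

universe w v u

namespace NExangulated

variable {C : Type u} [Category.{v} C] [Preadditive C] {n : ℕ}

/-- `X•` is an `n`-kernel sequence:  for every object `Q` the sequence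
`0 → C(Q,X^0) → C(Q,X^1) → ⋯ → C(Q,X^{n+1})` is exact. -/
def IsKernelSeq (X : NComplex C n) : Prop :=
  ∀ Q : C,
    (∀ u : Q ⟶ X.obj 0, u ≫ X.d 0 = 0 → u = 0) ∧
    (∀ i : ℕ, i + 1 ≤ n →
      ExactAt (fun u : Q ⟶ X.obj i => u ≫ X.d i)
        (fun u : Q ⟶ X.obj (i + 1) => u ≫ X.d (i + 1)))

/-- `X•` is an `n`-cokernel sequence:  for every object `Q` the sequence
`0 → C(X^{n+1},Q) → C(X^n,Q) → ⋯ → C(X^0,Q)` is exact. -/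
def IsCokernelSeq (X : NComplex C n) : Prop :=
  ∀ Q : C,
    (∀ u : X.obj (n + 1) ⟶ Q, X.d n ≫ u = 0 → u = 0) ∧
    (∀ i : ℕ, i + 1 ≤ n →
      ExactAt (fun u : X.obj (i + 2) ⟶ Q => X.d (i + 1) ≫ u)
        (fun u : X.obj (i + 1) ⟶ Q => X.d i ≫ u))

/-- `X•` is an `n`-exact sequence. -/
def IsNExactSeq (X : NComplex C n) : Prop :=
  IsKernelSeq X ∧ IsCokernelSeq X

end NExangulated
namespace NExangulated

variable {C : Type u} [Category.{v} C] [Preadditive C] [HasFiniteBiproducts C] {n : ℕ}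

/-- Auxiliary: a commutative square in degrees `k, k+1` extends to a full morphism
of complexes, using the cokernel property of `X` above and the kernel property
of `Y` below. -/
lemma exists_extension (X Y : NComplex C n) (hX : IsCokernelSeq X) (hY : IsKernelSeq Y)
    (k : ℕ) (hk : k ≤ n)
    (a : X.obj k ⟶ Y.obj k) (b : X.obj (k + 1) ⟶ Y.obj (k + 1))
    (hsq : a ≫ Y.d k = X.d k ≫ b) :
    ∃ f : NComplexHom X Y, f.f k = a ∧ f.f (k + 1) = b := by
  have stage1 : ∀ m : ℕ, ∃ F : ∀ i, X.obj i ⟶ Y.obj i,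
      F k = a ∧ F (k + 1) = b ∧
      ∀ i, k ≤ i → i ≤ k + m → i ≤ n → F i ≫ Y.d i = X.d i ≫ F (i + 1) := by
    intro m
    induction m with
    | zero =>
      refine ⟨Function.update (Function.update
          (fun i => (0 : X.obj i ⟶ Y.obj i)) k a) (k + 1) b, ?_, ?_, ?_⟩
      · rw [Function.update_of_ne (by omega), Function.update_self]
      · rw [Function.update_self]
      · intro i h1 h2 _
        obtain rfl : i = k := le_antisymm (by omega) h1
        rw [Function.update_self, Function.update_of_ne (by omega), Function.update_self]
        exact hsq
    | succ m ih =>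
      obtain ⟨F, hFk, hFk1, hFc⟩ := ih
      by_cases h : k + m + 1 ≤ n
      · have hu : X.d (k + m) ≫ (F (k + m + 1) ≫ Y.d (k + m + 1)) = 0 := by
          rw [← Category.assoc, ← hFc (k + m) (by omega) (by omega) (by omega),
            Category.assoc, Y.d_comp_d (k + m) (by omega), comp_zero]
        obtain ⟨t, ht⟩ := ((hX (Y.obj (k + m + 2))).2 (k + m) (by omega)
          (F (k + m + 1) ≫ Y.d (k + m + 1))).mp hu
        refine ⟨Function.update F (k + m + 2) t, ?_, ?_, ?_⟩
        · rw [Function.update_of_ne (by omega)]; exact hFk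
        · rw [Function.update_of_ne (by omega)]; exact hFk1
        · intro i h1 h2 h3
          by_cases hi : i ≤ k + m
          · rw [Function.update_of_ne (by omega), Function.update_of_ne (by omega)]
            exact hFc i h1 hi h3
          · obtain rfl : i = k + m + 1 := by omega
            rw [Function.update_of_ne (by omega), Function.update_self]
            exact ht.symm
      · exact ⟨F, hFk, hFk1, fun i h1 h2 h3 => hFc i h1 (by omega) h3⟩
  have stage2 : ∀ m : ℕ, ∃ F : ∀ i, X.obj i ⟶ Y.obj i,
      F k = a ∧ F (k + 1) = b ∧
      ∀ i, k - m ≤ i → i ≤ n → F i ≫ Y.d i = X.d i ≫ F (i + 1) := by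
    intro m
    induction m with
    | zero =>
      obtain ⟨F, h1, h2, h3⟩ := stage1 n
      exact ⟨F, h1, h2, fun i hi1 hi2 => h3 i (by omega) (by omega) hi2⟩
    | succ m ih =>
      obtain ⟨F, hFk, hFk1, hFc⟩ := ih
      by_cases h : m < k
      · obtain ⟨i0, hi0⟩ : ∃ i0, k - m = i0 + 1 := ⟨k - m - 1, by omega⟩
        have hu : (X.d i0 ≫ F (i0 + 1)) ≫ Y.d (i0 + 1) = 0 := by
          rw [Category.assoc, hFc (i0 + 1) (by omega) (by omega), ← Category.assoc,
            X.d_comp_d i0 (by omega), zero_comp]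
        obtain ⟨v, hv⟩ := ((hY (X.obj i0)).2 i0 (by omega) (X.d i0 ≫ F (i0 + 1))).mp hu
        refine ⟨Function.update F i0 v, ?_, ?_, ?_⟩
        · rw [Function.update_of_ne (by omega)]; exact hFk
        · rw [Function.update_of_ne (by omega)]; exact hFk1
        · intro i h1 h2
          by_cases hi : i = i0
          · subst hi
            rw [Function.update_self, Function.update_of_ne (by omega)]
            exact hv
          · rw [Function.update_of_ne (by omega), Function.update_of_ne (by omega)]
            exact hFc i (by omega) h2
      · exact ⟨F, hFk, hFk1, fun i h1 h2 => hFc i (by omega) h2⟩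
  obtain ⟨F, h1, h2, h3⟩ := stage2 k
  exact ⟨⟨F, fun i hi => h3 i (by omega) hi⟩, h1, h2⟩

/-- Auxiliary: two morphisms of complexes agreeing in degrees `k` and `k+1`
are homotopic. -/
lemma homotopic_of_agree (hn : 0 < n) (X Y : NComplex C n)
    (hX : IsCokernelSeq X) (hY : IsKernelSeq Y)
    (k : ℕ) (hk : k ≤ n) (f g : NComplexHom X Y)
    (e1 : f.f k = g.f k) (e2 : f.f (k + 1) = g.f (k + 1)) :
    Homotopic f g := by
  have hcomm : ∀ j, j ≤ n →
      (g.f j - f.f j) ≫ Y.d j = X.d j ≫ (g.f (j + 1) - f.f (j + 1)) := by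
    intro j hj
    rw [Preadditive.sub_comp, Preadditive.comp_sub, f.comm j hj, g.comm j hj]
  have key : ∀ j : ℕ, j + 1 ≤ n →
      ∀ (p : X.obj (j + 1) ⟶ Y.obj j) (q : X.obj (j + 2) ⟶ Y.obj (j + 1)),
      g.f (j + 1) - f.f (j + 1) = p ≫ Y.d j + X.d (j + 1) ≫ q →
      X.d (j + 1) ≫ ((g.f (j + 2) - f.f (j + 2)) - q ≫ Y.d (j + 1)) = 0 := by
    intro j hj p q hc
    have e3 : X.d (j + 1) ≫ q = (g.f (j + 1) - f.f (j + 1)) - p ≫ Y.d j := by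
      rw [hc]; abel
    rw [Preadditive.comp_sub, ← Category.assoc, e3, Preadditive.sub_comp,
      ← hcomm (j + 1) hj, Category.assoc, Y.d_comp_d j hj, comp_zero]
    abel
  have up : ∀ m : ℕ, ∃ φ : ∀ i, X.obj (i + 1) ⟶ Y.obj i,
      (∀ j, j ≤ k + 1 → φ j = 0) ∧
      (∀ j, k ≤ j → j ≤ k + m → j + 1 ≤ n →
        g.f (j + 1) - f.f (j + 1) = φ j ≫ Y.d j + X.d (j + 1) ≫ φ (j + 1)) := by
    intro m
    induction m with
    | zero =>
      refine ⟨fun _ => 0, fun _ _ => rfl, ?_⟩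
      intro j h1 h2 _
      obtain rfl : j = k := le_antisymm (by omega) h1
      simp [e2]
    | succ m ih =>
      obtain ⟨φ, hz, hc⟩ := ih
      by_cases hcase : k + m + 2 ≤ n
      · have hu := key (k + m) (by omega) (φ (k + m)) (φ (k + m + 1))
          (hc (k + m) (by omega) (by omega) (by omega))
        obtain ⟨t, ht⟩ := ((hX (Y.obj (k + m + 2))).2 (k + m + 1) (by omega)
          ((g.f (k + m + 2) - f.f (k + m + 2)) - φ (k + m + 1) ≫ Y.d (k + m + 1))).mp hu
        refine ⟨Function.update φ (k + m + 2) t, ?_, ?_⟩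
        · intro j hj
          rw [Function.update_of_ne (by omega)]
          exact hz j hj
        · intro j h1 h2 h3
          by_cases hj : j ≤ k + m
          · rw [Function.update_of_ne (by omega), Function.update_of_ne (by omega)]
            exact hc j h1 hj h3
          · obtain rfl : j = k + m + 1 := by omega
            have ht' : X.d (k + m + 2) ≫ t = (g.f (k + m + 2) - f.f (k + m + 2)) -
                φ (k + m + 1) ≫ Y.d (k + m + 1) := ht
            show g.f (k + m + 2) - f.f (k + m + 2) =
              Function.update φ (k + m + 2) t (k + m + 1) ≫ Y.d (k + m + 1) +
                X.d (k + m + 2) ≫ Function.update φ (k + m + 2) t (k + m + 2)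
            rw [Function.update_of_ne (by omega), Function.update_self, ht']
            abel
      · exact ⟨φ, hz, fun j h1 h2 h3 => hc j h1 (by omega) h3⟩
  have upn : ∃ φ : ∀ i, X.obj (i + 1) ⟶ Y.obj i,
      (∀ j, k ≤ j → j + 1 ≤ n →
        g.f (j + 1) - f.f (j + 1) = φ j ≫ Y.d j + X.d (j + 1) ≫ φ (j + 1)) ∧
      (g.f (n + 1) - f.f (n + 1) = φ n ≫ Y.d n) := by
    obtain ⟨φ, hz, hc⟩ := up n
    refine ⟨φ, fun j h1 h2 => hc j h1 (by omega) h2, ?_⟩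
    rcases eq_or_lt_of_le hk with rfl | hlt
    · rw [hz k (by omega), zero_comp, e2, sub_self]
    · obtain ⟨j0, rfl⟩ : ∃ j0, n = j0 + 1 := ⟨n - 1, by omega⟩
      have hu := key j0 (by omega) (φ j0) (φ (j0 + 1))
        (hc j0 (by omega) (by omega) (by omega))
      have := (hX (Y.obj (j0 + 2))).1 _ hu
      rw [sub_eq_zero] at this
      exact this
  have down : ∀ m : ℕ, ∃ φ : ∀ i, X.obj (i + 1) ⟶ Y.obj i,
      (∀ j, k - m ≤ j → j + 1 ≤ n →
        g.f (j + 1) - f.f (j + 1) = φ j ≫ Y.d j + X.d (j + 1) ≫ φ (j + 1)) ∧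
      (g.f (n + 1) - f.f (n + 1) = φ n ≫ Y.d n) := by
    intro m
    induction m with
    | zero =>
      obtain ⟨φ, hc, hCn⟩ := upn
      exact ⟨φ, fun j h1 h2 => hc j (by omega) h2, hCn⟩
    | succ m ih =>
      obtain ⟨φ, hc, hCn⟩ := ih
      by_cases hcase : m < k
      · obtain ⟨i0, hi0⟩ : ∃ i0, k - m = i0 + 1 := ⟨k - m - 1, by omega⟩
        have hsub : X.d (i0 + 1) ≫ φ (i0 + 1) ≫ Y.d (i0 + 1) =
            (g.f (i0 + 1) - f.f (i0 + 1)) ≫ Y.d (i0 + 1) := by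
          by_cases h2 : i0 + 2 ≤ n
          · have e3 : φ (i0 + 1) ≫ Y.d (i0 + 1) =
                (g.f (i0 + 2) - f.f (i0 + 2)) - X.d (i0 + 2) ≫ φ (i0 + 2) := by
              rw [hc (i0 + 1) (by omega) h2]; abel
            rw [e3, Preadditive.comp_sub, ← Category.assoc, X.d_comp_d (i0 + 1) h2,
              zero_comp, sub_zero, hcomm (i0 + 1) (by omega)]
          · have e : i0 + 1 = n := by omega
            subst e
            rw [hcomm (i0 + 1) (by omega), hCn]
        have key2 : ((g.f (i0 + 1) - f.f (i0 + 1)) - X.d (i0 + 1) ≫ φ (i0 + 1)) ≫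
            Y.d (i0 + 1) = 0 := by
          rw [Preadditive.sub_comp, Category.assoc, hsub, sub_self]
        obtain ⟨v, hv⟩ := ((hY (X.obj (i0 + 1))).2 i0 (by omega)
          ((g.f (i0 + 1) - f.f (i0 + 1)) - X.d (i0 + 1) ≫ φ (i0 + 1))).mp key2
        refine ⟨Function.update φ i0 v, ?_, ?_⟩
        · intro j h1 h2
          by_cases hj : j = i0
          · subst hj
            have hv' : v ≫ Y.d j = (g.f (j + 1) - f.f (j + 1)) -
                X.d (j + 1) ≫ φ (j + 1) := hv
            rw [Function.update_self, Function.update_of_ne (by omega), hv']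
            abel
          · rw [Function.update_of_ne (by omega), Function.update_of_ne (by omega)]
            exact hc j (by omega) h2
        · rw [Function.update_of_ne (by omega)]
          exact hCn
      · exact ⟨φ, fun j h1 h2 => hc j (by omega) h2, hCn⟩
  obtain ⟨φ, hc, hCn⟩ := down k
  have hC0 : g.f 0 - f.f 0 = X.d 0 ≫ φ 0 := by
    have e3 : φ 0 ≫ Y.d 0 = (g.f 1 - f.f 1) - X.d 1 ≫ φ 1 := by
      rw [hc 0 (by omega) (by omega)]; abel
    have key0 : ((g.f 0 - f.f 0) - X.d 0 ≫ φ 0) ≫ Y.d 0 = 0 := by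
      rw [Preadditive.sub_comp, hcomm 0 (by omega), Category.assoc, e3]
      simp only [Preadditive.comp_sub]
      rw [← Category.assoc, X.d_comp_d 0 hn, zero_comp]
      try simp only [zero_add, Nat.zero_add]
      abel
    have := (hY (X.obj 0)).1 _ key0
    rw [sub_eq_zero] at this
    exact this
  exact ⟨φ, hC0, fun i hi => hc i (by omega) hi, hCn⟩
/-- Given `n`-exact sequences `X•`, `Y•`, `k ∈ {0,…,n}` and a
commutative square `b ∘ d_X^k = d_Y^k ∘ a`, there is a morphism of complexes
`f• : X• → Y•` with `f^k = a`, `f^{k+1} = b`; any two such are homotopic; and if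
`a`, `b` are isomorphisms then any such `f•` is a homotopy equivalence. -/
theorem statement_15 (hn : 0 < n)
    (X Y : NComplex C n) (hX : IsNExactSeq X) (hY : IsNExactSeq Y)
    (k : ℕ) (hk : k ≤ n)
    (a : X.obj k ⟶ Y.obj k) (b : X.obj (k + 1) ⟶ Y.obj (k + 1))
    (hsq : a ≫ Y.d k = X.d k ≫ b) :
    (∃ f : NComplexHom X Y, f.f k = a ∧ f.f (k + 1) = b) ∧
    (∀ f g : NComplexHom X Y, f.f k = a → f.f (k + 1) = b →
      g.f k = a → g.f (k + 1) = b → Homotopic f g) ∧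
    (IsIso a → IsIso b →
      ∀ f : NComplexHom X Y, f.f k = a → f.f (k + 1) = b → IsHomotopyEquiv f) := by
  refine ⟨exists_extension X Y hX.2 hY.1 k hk a b hsq, ?_, ?_⟩
  · intro f g hf1 hf2 hg1 hg2
    exact homotopic_of_agree hn X Y hX.2 hY.1 k hk f g (hf1.trans hg1.symm)
      (hf2.trans hg2.symm)
  · intro ha hb f hf1 hf2
    have hsq' : inv a ≫ X.d k = Y.d k ≫ inv b := by
      rw [IsIso.eq_comp_inv, Category.assoc, IsIso.inv_comp_eq, hsq]
    obtain ⟨g, hg1, hg2⟩ := exists_extension Y X hY.2 hX.1 k hk (inv a) (inv b) hsq'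
    refine ⟨g, ?_, ?_⟩
    · apply homotopic_of_agree hn X X hX.2 hX.1 k hk (f.comp g) (NComplexHom.id X)
      · show f.f k ≫ g.f k = 𝟙 _
        rw [hf1, hg1, IsIso.hom_inv_id]
      · show f.f (k + 1) ≫ g.f (k + 1) = 𝟙 _
        rw [hf2, hg2, IsIso.hom_inv_id]
    · apply homotopic_of_agree hn Y Y hY.2 hY.1 k hk (g.comp f) (NComplexHom.id Y)
      · show g.f k ≫ f.f k = 𝟙 _
        rw [hf1, hg1, IsIso.inv_hom_id]
      · show g.f (k + 1) ≫ f.f (k + 1) = 𝟙 _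
        rw [hf2, hg2, IsIso.inv_hom_id]

end NExangulated
end

section
/- Let n be a positive integer and C an additive category. Let X• and Y• be n-exact sequences in C and let f•, g• : X• → Y• be morphisms of complexes with f^0 = g^0 and f^{n+1} = g^{n+1}. Then f• and g• are homotopic. -/
/-!
Basic definitions for the theory of `n`-exangulated categories
(Herschend–Liu–Nakaoka): `(n+2)`-term complexes in an additive category,
morphisms of such complexes, homotopies, and homotopy equivalences.

A complex is recorded as a function `obj : ℕ → C` together with differentials
`d i : obj i ⟶ obj (i+1)`; only the components in degrees `0, …, n+1`
(and the differentials `d 0, …, d n`) are relevant, which is why all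
conditions are imposed only in that range.
-/

open CategoryTheory CategoryTheory.Limits Opposite

universe w v u

namespace NExangulated

variable {C : Type u} [Category.{v} C] [Preadditive C] [HasFiniteBiproducts C] {n : ℕ}

/-- **Statement 16** (Comparison lemma).  Two morphisms of complexes between
`n`-exact sequences agreeing in degrees `0` and `n+1` are homotopic. -/
theorem statement_16 (hn : 0 < n)
    (X Y : NComplex C n) (hX : IsNExactSeq X) (hY : IsNExactSeq Y)
    (f g : NComplexHom X Y)
    (h0 : f.f 0 = g.f 0) (htop : f.f (n + 1) = g.f (n + 1)) :
    Homotopic f g := by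
  classical
  have h0' : g.f 0 - f.f 0 = 0 := by rw [h0, sub_self]
  have hcomm : ∀ i, i ≤ n →
      (g.f i - f.f i) ≫ Y.d i = X.d i ≫ (g.f (i + 1) - f.f (i + 1)) := by
    intro i hi
    simp [Preadditive.sub_comp, Preadditive.comp_sub, f.comm i hi, g.comm i hi]
  have step : ∀ i, i + 1 ≤ n → ∀ ψ : X.obj (i + 1) ⟶ Y.obj i,
      X.d i ≫ ((g.f (i + 1) - f.f (i + 1)) - ψ ≫ Y.d i) = 0 →
      ∃ ψ' : X.obj (i + 2) ⟶ Y.obj (i + 1),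
        X.d (i + 1) ≫ ψ' = (g.f (i + 1) - f.f (i + 1)) - ψ ≫ Y.d i := by
    intro i hi ψ hψ
    exact ((hX.2 (Y.obj (i + 1))).2 i hi _).mp hψ
  have main : ∀ i : ℕ, ∃ φ : ∀ j : ℕ, X.obj (j + 1) ⟶ Y.obj j,
      φ 0 = 0 ∧
      (∀ j, j + 1 ≤ n → j + 1 ≤ i →
        g.f (j + 1) - f.f (j + 1) = φ j ≫ Y.d j + X.d (j + 1) ≫ φ (j + 1)) ∧
      (i ≤ n → X.d i ≫ ((g.f (i + 1) - f.f (i + 1)) - φ i ≫ Y.d i) = 0) := by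
    intro i
    induction i with
    | zero =>
      refine ⟨fun _ => 0, rfl, fun j _ hj => by omega, fun _ => ?_⟩
      rw [zero_comp, sub_zero, ← hcomm 0 (Nat.zero_le n), h0', zero_comp]
    | succ i ih =>
      obtain ⟨φ, hφ0, hrel, hinv⟩ := ih
      by_cases hi : i + 1 ≤ n
      · obtain ⟨ψ', hψ'⟩ := step i hi (φ i) (hinv (Nat.le_of_succ_le hi))
        refine ⟨Function.update φ (i + 1) ψ', ?_, ?_, ?_⟩
        · rw [Function.update_of_ne (by omega)]; exact hφ0
        · intro j hjn hji
          rcases Nat.lt_or_ge (j + 1) (i + 1) with hj | hj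
          · rw [Function.update_of_ne (by omega), Function.update_of_ne (by omega)]
            exact hrel j hjn (by omega)
          · have hji' : j = i := by omega
            subst hji'
            rw [Function.update_of_ne (by omega), Function.update_self, hψ']
            abel
        · intro _
          rw [Function.update_self, Preadditive.comp_sub, ← Category.assoc, hψ',
            ← hcomm (i + 1) hi, Preadditive.sub_comp, Preadditive.sub_comp,
            Category.assoc, Y.d_comp_d i hi, comp_zero]
          simp only [Preadditive.sub_comp]
          abel
      · refine ⟨φ, hφ0, ?_, fun hcon => absurd hcon hi⟩
        intro j hjn hji
        exact hrel j hjn (by omega)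
  obtain ⟨φ, hφ0, hrel, hinv⟩ := main n
  have htop' : g.f (n + 1) - f.f (n + 1) - φ n ≫ Y.d n = 0 :=
    (hX.2 (Y.obj (n + 1))).1 _ (hinv le_rfl)
  refine ⟨φ, ?_, ?_, ?_⟩
  · rw [h0', hφ0, comp_zero]
  · intro i hi; exact hrel i hi hi
  · rw [← sub_eq_zero]; exact htop'

end NExangulated
end

section
/- Let n be a positive integer, C an additive category, and A, C objects of C. Let X• and Y• be n-exact sequences with X^0 = Y^0 = A and X^{n+1} = Y^{n+1} = C. Then: (1) any two morphisms of complexes X• → Y• whose degree-0 components are id_A and degree-(n+1) components are id_C are homotopic; (2) if there exist such morphisms in both directions X• → Y• and Y• → X•, then X• and Y• are homotopy equivalent in C_{(A,C)}, i.e. any such morphism X• → Y• is a homotopy equivalence in C_{(A,C)}. -/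
/-!
Basic definitions for the theory of `n`-exangulated categories
(Herschend–Liu–Nakaoka): `(n+2)`-term complexes in an additive category,
morphisms of such complexes, homotopies, and homotopy equivalences.

A complex is recorded as a function `obj : ℕ → C` together with differentials
`d i : obj i ⟶ obj (i+1)`; only the components in degrees `0, …, n+1`
(and the differentials `d 0, …, d n`) are relevant, which is why all
conditions are imposed only in that range.
-/

open CategoryTheory CategoryTheory.Limits Opposite

universe w v u

namespace NExangulated

variable {C : Type u} [Category.{v} C] [Preadditive C] [HasFiniteBiproducts C] {n : ℕ}

/-- Key lemma: if `X` is an `n`-cokernel sequence, any two morphisms `X → Y`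
agreeing in degrees `0` and `n+1` are homotopic. -/
lemma homotopic_of_ends_eq {X Y : NComplex C n} (hX : IsCokernelSeq X)
    (f g : NComplexHom X Y) (h0 : f.f 0 = g.f 0) (h1 : f.f (n + 1) = g.f (n + 1)) :
    Homotopic f g := by
  set hh : ∀ i, X.obj i ⟶ Y.obj i := fun i => g.f i - f.f i with hhdef
  have hcomm : ∀ i, i ≤ n → hh i ≫ Y.d i = X.d i ≫ hh (i + 1) := by
    intro i hi
    simp only [hhdef, Preadditive.sub_comp, Preadditive.comp_sub, f.comm i hi, g.comm i hi]
  have hh0 : hh 0 = 0 := by simp [hhdef, h0]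
  have hhn : hh (n + 1) = 0 := by simp [hhdef, h1]
  have key : ∀ k, k ≤ n → ∃ φ : ∀ j : ℕ, X.obj (j + 1) ⟶ Y.obj j,
      (hh 0 = X.d 0 ≫ φ 0) ∧
      (∀ i, i + 1 ≤ k → hh (i + 1) = φ i ≫ Y.d i + X.d (i + 1) ≫ φ (i + 1)) ∧
      (X.d k ≫ φ k ≫ Y.d k = hh k ≫ Y.d k) := by
    intro k
    induction k with
    | zero =>
      intro _
      exact ⟨fun _ => 0, by simp [hh0], fun i hi => absurd hi (by omega), by simp [hh0]⟩
    | succ k ih =>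
      intro hk
      obtain ⟨φ, c0, cmid, cinv⟩ := ih (by omega)
      set u : X.obj (k + 1) ⟶ Y.obj (k + 1) := hh (k + 1) - φ k ≫ Y.d k with udef
      have hu : X.d k ≫ u = 0 := by
        rw [udef, Preadditive.comp_sub, ← hcomm k (by omega), ← cinv]
        simp
      obtain ⟨a, ha⟩ := ((hX (Y.obj (k + 1))).2 k hk u).mp hu
      have ha' : X.d (k + 1) ≫ a = u := ha
      have upd_ne : ∀ j (_ : j ≠ k + 1), Function.update φ (k + 1) a j = φ j :=
        fun j hj => Function.update_of_ne hj a φ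
      have upd_eq : Function.update φ (k + 1) a (k + 1) = a := Function.update_self _ _ _
      refine ⟨Function.update φ (k + 1) a, ?_, ?_, ?_⟩
      · rw [upd_ne 0 (by omega)]; exact c0
      · intro i hi
        rcases Nat.lt_or_ge (i + 1) (k + 1) with h | h
        · rw [upd_ne i (by omega), upd_ne (i + 1) (by omega)]
          exact cmid i (by omega)
        · have hik : i = k := by omega
          subst hik
          rw [upd_ne i (by omega), upd_eq, ha', udef]
          abel
      · rw [upd_eq, ← Category.assoc, ha', udef]
        rw [Preadditive.sub_comp, Category.assoc, Y.d_comp_d k hk]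
        simp
  obtain ⟨φ, c0, cmid, cinv⟩ := key n le_rfl
  refine ⟨φ, c0, cmid, ?_⟩
  show hh (n + 1) = φ n ≫ Y.d n
  have hzero : X.d n ≫ (φ n ≫ Y.d n) = 0 := by
    rw [cinv, hcomm n le_rfl, hhn]; simp
  have := (hX (Y.obj (n + 1))).1 (φ n ≫ Y.d n) hzero
  rw [this, hhn]

/-- **Statement 17.**  For `n`-exact sequences `X•`, `Y•` with the same ends `A`, `C`:
(1) any two morphisms `X• → Y•` with identity end components are homotopic;
(2) if morphisms with identity end components exist in both directions, then any
such morphism `X• → Y•` is a homotopy equivalence in `C_{(A,C)}`. -/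
theorem statement_17 (hn : 0 < n) (A Cc : C)
    (X Y : NComplex C n)
    (hX0 : X.obj 0 = A) (hXn : X.obj (n + 1) = Cc)
    (hY0 : Y.obj 0 = A) (hYn : Y.obj (n + 1) = Cc)
    (hX : IsNExactSeq X) (hY : IsNExactSeq Y) :
    (∀ f g : NComplexHom X Y,
      f.f 0 = eqToHom (hX0.trans hY0.symm) → f.f (n + 1) = eqToHom (hXn.trans hYn.symm) →
      g.f 0 = eqToHom (hX0.trans hY0.symm) → g.f (n + 1) = eqToHom (hXn.trans hYn.symm) →
      Homotopic f g) ∧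
    ((∃ f : NComplexHom X Y, f.f 0 = eqToHom (hX0.trans hY0.symm) ∧
        f.f (n + 1) = eqToHom (hXn.trans hYn.symm)) →
     (∃ h : NComplexHom Y X, h.f 0 = eqToHom (hY0.trans hX0.symm) ∧
        h.f (n + 1) = eqToHom (hYn.trans hXn.symm)) →
     ∀ f : NComplexHom X Y,
       f.f 0 = eqToHom (hX0.trans hY0.symm) → f.f (n + 1) = eqToHom (hXn.trans hYn.symm) →
       ∃ g : NComplexHom Y X, g.f 0 = eqToHom (hY0.trans hX0.symm) ∧
         g.f (n + 1) = eqToHom (hYn.trans hXn.symm) ∧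
         Homotopic (f.comp g) (NComplexHom.id X) ∧
         Homotopic (g.comp f) (NComplexHom.id Y)) := by
  constructor
  · intro f g hf0 hfn hg0 hgn
    exact homotopic_of_ends_eq hX.2 f g (hf0.trans hg0.symm) (hfn.trans hgn.symm)
  · rintro _ ⟨h, hh0, hhn⟩ f hf0 hfn
    refine ⟨h, hh0, hhn, ?_, ?_⟩
    · refine homotopic_of_ends_eq hX.2 _ _ ?_ ?_
      · show f.f 0 ≫ h.f 0 = 𝟙 _
        rw [hf0, hh0]; simp
      · show f.f (n + 1) ≫ h.f (n + 1) = 𝟙 _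
        rw [hfn, hhn]; simp
    · refine homotopic_of_ends_eq hY.2 _ _ ?_ ?_
      · show h.f 0 ≫ f.f 0 = 𝟙 _
        rw [hf0, hh0]; simp
      · show h.f (n + 1) ≫ f.f (n + 1) = 𝟙 _
        rw [hfn, hhn]; simp

end NExangulated
end

section
/- Let 𝒯 be a triangulated category, n ≥ 2 an integer, and 𝒯′ a full subcategory of 𝒯 closed under isomorphisms and closed under extensions (i.e. 𝒯′ ∗ 𝒯′ ⊆ 𝒯′). For 1 ≤ i < n let 𝒯′_{[0,i]} := 𝒯′ ∗ 𝒯′[1] ∗ ⋯ ∗ 𝒯′[i]. If 𝒯′[i] ∗ 𝒯′ ⊆ 𝒯′_{[0,i]} holds for every 1 ≤ i < n, then 𝒯′_{[0,i]} is closed under extensions (i.e. 𝒯′_{[0,i]} ∗ 𝒯′_{[0,i]} ⊆ 𝒯′_{[0,i]}) for every 1 ≤ i < n. -/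
/-!
Write `P[j]` for the class of objects isomorphic to some `A⟦j⟧` with `A ∈ P`, and
`P_{[0,i]} = P ∗ P[1] ∗ ⋯ ∗ P[i]`. The product `∗` is associative (octahedral axiom) and commutes
with shifts, so `P_{[0,c+d+1]} = P_{[0,c]} ∗ P_{[0,d]}[c+1]`.

By induction on `i` one shows that `P_{[0,i]}` absorbs `P` on the right:
`P_{[0,i]} ∗ P = P_{[0,i-1]} ∗ (P[i] ∗ P) ⊆ (P_{[0,i-1]} ∗ P_{[0,i-1]}) ∗ P[i] ⊆ P_{[0,i]}`,
using the hypothesis `P[i] ∗ P ⊆ P_{[0,i]}` and the extension-closedness of `P_{[0,i-1]}`.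
Extension-closedness of `P_{[0,i]}` in turn follows from absorption of `P` at all levels `d ≤ i`:
by the splitting above `P_{[0,c+d+1]} ∗ P[c+1] = P_{[0,c]} ∗ (P_{[0,d]} ∗ P)[c+1]`, so `P_{[0,i]}`
absorbs every `P[j]` with `j ≤ i`, hence every product of them, in particular `P_{[0,i]}`.
-/

open CategoryTheory CategoryTheory.Limits CategoryTheory.Pretriangulated

universe v u

namespace Stmt19

variable (C : Type u) [Category.{v} C] [HasZeroObject C] [HasShift C ℤ]
  [Preadditive C] [∀ k : ℤ, (shiftFunctor C k).Additive] [Pretriangulated C]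
  [IsTriangulated C]

/-- `S ∗ T` is the class of objects `X` admitting a distinguished triangle
`A → X → B → A[1]` with `A ∈ S` and `B ∈ T`. -/
def star (S T : Set C) : Set C :=
  {X | ∃ (A B : C) (f : A ⟶ X) (g : X ⟶ B) (h : B ⟶ A⟦(1 : ℤ)⟧),
    A ∈ S ∧ B ∈ T ∧ (Triangle.mk f g h ∈ distTriang C)}

/-- `S[j]`, the class of all shifts `A⟦j⟧` of objects `A ∈ S`. -/
def shiftSet (S : Set C) (j : ℕ) : Set C :=
  (fun A => A⟦(j : ℤ)⟧) '' S

/-- `starSeq C S i = S ∗ S[1] ∗ ⋯ ∗ S[i]` (the operation `∗` being associative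
by the octahedral axiom, the bracketing is immaterial; here it is taken
left-associated). -/
def starSeq (S : Set C) : ℕ → Set C
  | 0 => S
  | (i + 1) => star C (starSeq S i) (shiftSet C S (i + 1))

end Stmt19

namespace CategoryTheory.ObjectProperty

section Shift

variable {C : Type*} [Category* C] {A : Type*} [AddGroup A] [HasShift C A]

lemma map_shiftFunctor (P : ObjectProperty C) [P.IsClosedUnderIsomorphisms] (a : A) :
    P.map (shiftFunctor C a) = P.shift (-a) := by
  ext X
  constructor
  · rintro ⟨Y, hY, ⟨e⟩⟩
    exact P.prop_of_iso ((shiftShiftNeg Y a).symm ≪≫ (shiftFunctor C (-a)).mapIso e) hY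
  · exact fun hX => ⟨X⟦-a⟧, hX, ⟨shiftNegShift X a⟩⟩

end Shift

variable {C : Type*} [Category* C] [HasZeroObject C] [HasShift C ℤ] [Preadditive C]
  [∀ k : ℤ, (shiftFunctor C k).Additive] [Pretriangulated C]

local infixl:70 " ∗ " => extensionProduct

lemma shift_extensionProduct (P Q : ObjectProperty C) [P.IsClosedUnderIsomorphisms]
    [Q.IsClosedUnderIsomorphisms] (a : ℤ) :
    (P ∗ Q).shift a = P.shift a ∗ Q.shift a := by
  ext X
  constructor
  · rintro ⟨Y, Z, f, g, h, hT, hY, hZ⟩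
    refine (P.shift a ∗ Q.shift a).prop_of_iso (shiftShiftNeg X a)
      ⟨_, _, _, _, _, Triangle.shift_distinguished _ hT (-a), ?_, ?_⟩
    · exact P.prop_of_iso (shiftNegShift Y a).symm hY
    · exact Q.prop_of_iso (shiftNegShift Z a).symm hZ
  · rintro ⟨Y, Z, f, g, h, hT, hY, hZ⟩
    exact ⟨_, _, _, _, _, Triangle.shift_distinguished _ hT a, hY, hZ⟩

/-- `P.shiftProduct i = P ∗ P[1] ∗ ⋯ ∗ P[i]`. Since `P.shift a` is the preimage of `P` under `⟦a⟧`,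
the class `P[j]` of shifts `A⟦j⟧` of objects of `P` is `P.shift (-j)`. -/
def shiftProduct (P : ObjectProperty C) : ℕ → ObjectProperty C
  | 0 => P
  | i + 1 => P.shiftProduct i ∗ P.shift (-((i + 1 : ℕ) : ℤ))

variable (P : ObjectProperty C)

instance [P.IsClosedUnderIsomorphisms] (i : ℕ) :
    (P.shiftProduct i).IsClosedUnderIsomorphisms := by
  cases i with
  | zero => assumption
  | succ i => rw [shiftProduct]; infer_instance

variable [IsTriangulated C] {P}

lemma extensionProduct_extensionProduct_le {A Q R : ObjectProperty C} (hQ : A ∗ Q ≤ A)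
    (hR : A ∗ R ≤ A) : A ∗ (Q ∗ R) ≤ A := by
  rw [← extensionProduct_assoc]
  exact (monotone_extensionProduct_left R hQ).trans hR

lemma extensionProduct_shiftProduct_le {A : ObjectProperty C} {i : ℕ} (h₀ : A ∗ P ≤ A)
    (hs : ∀ j < i, A ∗ P.shift (-((j + 1 : ℕ) : ℤ)) ≤ A) : A ∗ P.shiftProduct i ≤ A := by
  induction i with
  | zero => exact h₀
  | succ i ih =>
    exact extensionProduct_extensionProduct_le (ih fun j hj => hs j (by omega)) (hs i (by omega))

lemma shiftProduct_succ_extensionProduct_le {k : ℕ}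
    (hk : P.shiftProduct k ∗ P.shiftProduct k ≤ P.shiftProduct k)
    (h : P.shift (-((k + 1 : ℕ) : ℤ)) ∗ P ≤ P.shiftProduct (k + 1)) :
    P.shiftProduct (k + 1) ∗ P ≤ P.shiftProduct (k + 1) :=
  calc P.shiftProduct (k + 1) ∗ P = P.shiftProduct k ∗ (P.shift _ ∗ P) := extensionProduct_assoc ..
    _ ≤ P.shiftProduct k ∗ P.shiftProduct (k + 1) := monotone_extensionProduct_right _ h
    _ = (P.shiftProduct k ∗ P.shiftProduct k) ∗ P.shift _ := by
      rw [shiftProduct, extensionProduct_assoc]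
    _ ≤ P.shiftProduct (k + 1) := monotone_extensionProduct_left _ hk

variable [P.IsClosedUnderIsomorphisms]

lemma shiftProduct_add_succ (c d : ℕ) :
    P.shiftProduct (c + d + 1) =
      P.shiftProduct c ∗ (P.shiftProduct d).shift (-((c + 1 : ℕ) : ℤ)) := by
  induction d with
  | zero => rfl
  | succ d ih =>
    rw [show c + (d + 1) + 1 = c + d + 1 + 1 by omega, shiftProduct, ih, shiftProduct,
      shift_extensionProduct, extensionProduct_assoc,
      P.shift_shift _ _ (-((c + d + 1 + 1 : ℕ) : ℤ)) (by push_cast; ring)]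

lemma shiftProduct_extensionProduct_shift_le {d : ℕ}
    (hd : P.shiftProduct d ∗ P ≤ P.shiftProduct d) (c : ℕ) :
    P.shiftProduct (c + d + 1) ∗ P.shift (-((c + 1 : ℕ) : ℤ)) ≤ P.shiftProduct (c + d + 1) := by
  rw [shiftProduct_add_succ, extensionProduct_assoc, ← shift_extensionProduct]
  exact monotone_extensionProduct_right _ fun X hX => hd _ hX

lemma shiftProduct_extensionProduct_self_le {m : ℕ}
    (hE : ∀ d ≤ m, P.shiftProduct d ∗ P ≤ P.shiftProduct d) :
    P.shiftProduct m ∗ P.shiftProduct m ≤ P.shiftProduct m := by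
  refine extensionProduct_shiftProduct_le (hE m le_rfl) fun j hj => ?_
  obtain ⟨d, rfl⟩ : ∃ d, m = j + d + 1 := ⟨m - (j + 1), by omega⟩
  exact shiftProduct_extensionProduct_shift_le (hE d (by omega)) j

theorem shiftProduct_extensionProduct_self_le_of_shift_extensionProduct_le
    (hP : P ∗ P ≤ P) {m : ℕ}
    (h : ∀ i, 1 ≤ i → i ≤ m → P.shift (-(i : ℤ)) ∗ P ≤ P.shiftProduct i) :
    P.shiftProduct m ∗ P.shiftProduct m ≤ P.shiftProduct m := by
  refine shiftProduct_extensionProduct_self_le ?_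
  induction m with
  | zero =>
    intro d hd
    obtain rfl : d = 0 := by omega
    exact hP
  | succ k ih =>
    have hE := ih fun i hi hik => h i hi (by omega)
    intro d hd
    rcases Nat.lt_or_eq_of_le hd with hd | rfl
    · exact hE d (by omega)
    · exact shiftProduct_succ_extensionProduct_le (shiftProduct_extensionProduct_self_le hE)
        (h (k + 1) (by omega) le_rfl)

end CategoryTheory.ObjectProperty

namespace Stmt19

open ObjectProperty

local infixl:70 " ∗ " => extensionProduct

section

variable {C : Type u} [Category.{v} C] [HasShift C ℤ]

lemma isoClosure_shiftSet (S : Set C) [IsClosedUnderIsomorphisms (· ∈ S)] (j : ℕ) :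
    isoClosure (· ∈ shiftSet C S j) = ObjectProperty.shift (· ∈ S) (-(j : ℤ)) := by
  rw [← map_shiftFunctor, ← isoClosure_strictMap]
  congr 1
  ext X
  simp [shiftSet, strictMap_iff]

variable [HasZeroObject C] [Preadditive C] [∀ k : ℤ, (shiftFunctor C k).Additive]
  [Pretriangulated C]

lemma star_eq_extensionProduct (S T : Set C) : (· ∈ star C S T) = (· ∈ S) ∗ (· ∈ T) := by
  ext X
  constructor
  · rintro ⟨A, B, f, g, h, hA, hB, hT⟩
    exact ⟨A, B, f, g, h, hT, hA, hB⟩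
  · rintro ⟨A, B, f, g, h, hT, hA, hB⟩
    exact ⟨A, B, f, g, h, hA, hB, hT⟩

lemma starSeq_eq_shiftProduct [IsTriangulated C] (S : Set C) [IsClosedUnderIsomorphisms (· ∈ S)]
    (i : ℕ) : (· ∈ starSeq C S i) = shiftProduct (· ∈ S) i := by
  induction i with
  | zero => rfl
  | succ i ih =>
    rw [starSeq, star_eq_extensionProduct, ih, ← extensionProduct_isoClosure_right,
      isoClosure_shiftSet]
    rfl

end

variable (C : Type u) [Category.{v} C] [HasZeroObject C] [HasShift C ℤ]
  [Preadditive C] [∀ k : ℤ, (shiftFunctor C k).Additive] [Pretriangulated C]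
  [IsTriangulated C]

theorem statement_19 (n : ℕ) (S : Set C)
    (hiso : ∀ ⦃X Y : C⦄, (X ≅ Y) → X ∈ S → Y ∈ S)
    (hext : star C S S ⊆ S)
    (h : ∀ i : ℕ, 1 ≤ i → i < n → star C (shiftSet C S i) S ⊆ starSeq C S i) :
    ∀ i : ℕ, 1 ≤ i → i < n →
      star C (starSeq C S i) (starSeq C S i) ⊆ starSeq C S i := by
  have : IsClosedUnderIsomorphisms (· ∈ S) := ⟨fun e hX => hiso e hX⟩
  intro i _ hi
  have hP : (· ∈ S) ∗ (· ∈ S) ≤ (· ∈ S) := by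
    rw [← star_eq_extensionProduct]
    exact hext
  have hshift : ∀ j, 1 ≤ j → j ≤ i →
      ObjectProperty.shift (· ∈ S) (-(j : ℤ)) ∗ (· ∈ S) ≤ shiftProduct (· ∈ S) j := by
    intro j hj hji
    rw [← isoClosure_shiftSet, extensionProduct_isoClosure_left, ← star_eq_extensionProduct,
      ← starSeq_eq_shiftProduct]
    exact h j hj (by omega)
  have := shiftProduct_extensionProduct_self_le_of_shift_extensionProduct_le hP hshift
  rwa [← starSeq_eq_shiftProduct, ← star_eq_extensionProduct] at this

end Stmt19
end
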